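/- Let X₁,…,Xₙ be i.i.d. Bernoulli(p) random variables and let M(X) = Σ_{i=1}^n X_i. Fix ε > 0 and define δ = 2·exp(−2np²·((e^ε − 1)/(e^ε + p/(1−p)))²) if p ≤ 1/2, and δ = 2·exp(−2n(1−p)²·((e^ε − 1)/(e^ε + (1−p)/p))²) if p > 1/2. Then for every index j ≤ n and every set B of integers, P(Σ_{i=1}^n X_i ∈ B) ≤ e^ε · P(Σ_{i≠j} X_i ∈ B) + δ and P(Σ_{i≠j} X_i ∈ B) ≤ e^ε · P(Σ_{i=1}^n X_i ∈ B) + δ; that is, the sum mechanism on this data is (ε,δ)-noiseless private. -/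

import Mathlib

open MeasureTheory ProbabilityTheory

open Finset Real

/-!
Both sums are binomial, `Bin(n, p)` and `Bin(n - 1, p)`, and their weights satisfy
`b(n, k) (n - k) = n (1 - p) b(n - 1, k)`. Hence `b(n, k) ≤ e^ε b(n - 1, k)` off an upper tail of
`Bin(n, p)`, and `b(n - 1, k) ≤ e^ε b(n, k)` off a lower tail of `Bin(n - 1, p)`. By Hoeffding's
inequality both tails have mass at most `exp (-2 n θ²)`, where `δ = 2 exp (-2 n θ²)` with
`θ = p (1 - p) (e^ε - 1) / (1 + max p (1 - p) (e^ε - 1))` in both cases of the definition of `δ`.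
For the lower tail this needs `n θ ≤ n (1 - p) (e^ε - 1) - p`; when that fails, `n θ² ≤ 1/4`,
so `δ ≥ 1` and there is nothing to prove.
-/

lemma one_sub_add_mul_exp_le {p : ℝ} (hp0 : 0 ≤ p) (hp1 : p ≤ 1) (t : ℝ) :
    1 - p + p * exp t ≤ exp (p * t + t ^ 2 / 8) := by
  let Y : Bool → ℝ := fun b => (if b then 1 else 0) - p
  have hY : HasSubgaussianMGF Y ((‖(1 - p) - (-p)‖₊ / 2) ^ 2) Ber(true, false, ⟨p, hp0, hp1⟩) :=
    hasSubgaussianMGF_of_mem_Icc_of_integral_eq_zero (measurable_of_countable Y).aemeasurable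
      (ae_of_all _ fun b => by cases b <;> simp [Y])
      (by simp [integral_bernoulliMeasure, Y]; ring)
  have hmgf : 1 - p + p * exp t = exp (p * t) * mgf Y Ber(true, false, ⟨p, hp0, hp1⟩) t := by
    simp [mgf, integral_bernoulliMeasure, Y, mul_sub, exp_sub]
    field_simp
    ring
  have hle : mgf Y Ber(true, false, ⟨p, hp0, hp1⟩) t ≤ exp (t ^ 2 / 8) := by
    convert hY.mgf_le t using 2
    norm_num
    ring
  rw [hmgf, exp_add]
  gcongr

noncomputable def binomialWeight (p : ℝ) (m k : ℕ) : ℝ :=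
  m.choose k * p ^ k * (1 - p) ^ (m - k)

noncomputable def binomialMass (p : ℝ) (m : ℕ) (G : Set ℕ) : ℝ :=
  ∑ k ∈ range (m + 1), G.indicator (binomialWeight p m) k

section Binomial

variable {p : ℝ} {m : ℕ}

lemma binomialWeight_nonneg (hp0 : 0 ≤ p) (hp1 : p ≤ 1) (m k : ℕ) : 0 ≤ binomialWeight p m k := by
  have : 0 ≤ 1 - p := sub_nonneg.2 hp1
  unfold binomialWeight
  positivity

lemma binomialWeight_eq_zero_of_lt {k : ℕ} (h : m < k) : binomialWeight p m k = 0 := by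
  simp [binomialWeight, Nat.choose_eq_zero_of_lt h]

lemma binomialWeight_mul_sub {n k : ℕ} (hk : k ≤ n) :
    binomialWeight p n k * (n - k) = n * (1 - p) * binomialWeight p (n - 1) k := by
  rcases hk.eq_or_lt with rfl | hk
  · rcases k.eq_zero_or_pos with rfl | hk
    · simp
    · simp [binomialWeight_eq_zero_of_lt (Nat.sub_one_lt hk.ne')]
  obtain ⟨n, rfl⟩ : ∃ n', n = n' + 1 := ⟨n - 1, by omega⟩
  have hchoose : ((n + 1).choose k : ℝ) * ((n + 1 : ℕ) - k : ℝ) = (n.choose k) * (n + 1) := by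
    rw [← Nat.cast_sub hk.le, ← Nat.cast_mul, ← Nat.choose_mul_succ_eq]
    push_cast
    ring
  rw [Nat.add_sub_cancel, binomialWeight, binomialWeight, show n + 1 - k = n - k + 1 by omega,
    pow_succ]
  push_cast at hchoose ⊢
  linear_combination p ^ k * (1 - p) ^ (n - k) * (1 - p) * hchoose

lemma binomialMass_eq_sum_range {N : ℕ} (hmN : m < N) (G : Set ℕ) :
    binomialMass p m G = ∑ k ∈ range N, G.indicator (binomialWeight p m) k := by
  refine sum_subset (range_subset_range.2 hmN) fun k _ hk => ?_
  simp [binomialWeight_eq_zero_of_lt (by simpa using hk : m < k)]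

lemma sum_binomialWeight_mul_exp (p : ℝ) (m : ℕ) (t : ℝ) :
    ∑ k ∈ range (m + 1), binomialWeight p m k * exp (t * k) = (1 - p + p * exp t) ^ m := by
  rw [add_comm (1 - p), add_pow]
  refine sum_congr rfl fun k _ => ?_
  rw [binomialWeight, mul_pow, ← exp_nat_mul, mul_comm t]
  ring

lemma binomialMass_le_one (hp0 : 0 ≤ p) (hp1 : p ≤ 1) (G : Set ℕ) : binomialMass p m G ≤ 1 := by
  calc binomialMass p m G ≤ ∑ k ∈ range (m + 1), binomialWeight p m k :=
        sum_le_sum fun k _ =>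
          Set.indicator_le_self' (fun k _ => binomialWeight_nonneg hp0 hp1 m k) k
    _ = 1 := by simpa using sum_binomialWeight_mul_exp p m 0

lemma binomialMass_nonneg (hp0 : 0 ≤ p) (hp1 : p ≤ 1) (G : Set ℕ) : 0 ≤ binomialMass p m G :=
  sum_nonneg fun k _ => Set.indicator_nonneg (fun k _ => binomialWeight_nonneg hp0 hp1 m k) k

/-- Chernoff: Markov's inequality for `exp (t (k - m p))`, whose `Bin(m, p)`-mean is at most
`exp (m t² / 8)` by Hoeffding's lemma. -/
lemma binomialMass_le_exp (hp0 : 0 ≤ p) (hp1 : p ≤ 1) {G : Set ℕ} {t u : ℝ}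
    (hG : ∀ k ∈ G, u ≤ t * (k - m * p)) :
    binomialMass p m G ≤ exp (m * t ^ 2 / 8 - u) := by
  have hpoint : ∀ k, G.indicator (binomialWeight p m) k
      ≤ exp (-(t * m * p) - u) * (binomialWeight p m k * exp (t * k)) := by
    intro k
    have hw := binomialWeight_nonneg hp0 hp1 m k
    rw [← mul_assoc, mul_comm _ (binomialWeight p m k), mul_assoc, ← exp_add]
    by_cases hk : k ∈ G
    · rw [Set.indicator_of_mem hk]
      refine le_mul_of_one_le_right hw (one_le_exp ?_)
      linarith [hG k hk]
    · rw [Set.indicator_of_notMem hk]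
      positivity
  calc binomialMass p m G
      ≤ exp (-(t * m * p) - u) * ∑ k ∈ range (m + 1), binomialWeight p m k * exp (t * k) := by
        rw [mul_sum]
        exact sum_le_sum fun k _ => hpoint k
    _ ≤ exp (-(t * m * p) - u) * exp (p * t + t ^ 2 / 8) ^ m := by
        rw [sum_binomialWeight_mul_exp]
        gcongr
        exact one_sub_add_mul_exp_le hp0 hp1 t
    _ = exp (m * t ^ 2 / 8 - u) := by
        rw [← exp_nat_mul, ← exp_add]
        ring_nf

lemma binomialMass_upperTail_le (hp0 : 0 ≤ p) (hp1 : p ≤ 1) {N d : ℝ} (hN : 0 < N)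
    (hmN : m ≤ N) (hd : 0 ≤ d) :
    binomialMass p m {k | m * p + d ≤ k} ≤ exp (-2 * d ^ 2 / N) := by
  refine (binomialMass_le_exp (t := 4 * d / N) (u := 4 * d ^ 2 / N) hp0 hp1
    fun k hk => ?_).trans ?_
  · calc 4 * d ^ 2 / N = 4 * d / N * d := by ring
      _ ≤ _ := mul_le_mul_of_nonneg_left (by linarith [hk.out]) (by positivity)
  · gcongr
    field_simp
    nlinarith

lemma binomialMass_lowerTail_le (hp0 : 0 ≤ p) (hp1 : p ≤ 1) {N d : ℝ} (hN : 0 < N)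
    (hmN : m ≤ N) (hd : 0 ≤ d) :
    binomialMass p m {k | k ≤ m * p - d} ≤ exp (-2 * d ^ 2 / N) := by
  refine (binomialMass_le_exp (t := -(4 * d / N)) (u := 4 * d ^ 2 / N) hp0 hp1
    fun k hk => ?_).trans ?_
  · calc 4 * d ^ 2 / N = 4 * d / N * d := by ring
      _ ≤ 4 * d / N * (m * p - k) :=
          mul_le_mul_of_nonneg_left (by linarith [hk.out]) (by positivity)
      _ = _ := by ring
  · gcongr
    field_simp
    nlinarith

end Binomial

lemma sum_indicator_le_mul_sum_indicator_add {α : Type*} {s : Finset α} {f g : α → ℝ} {c : ℝ}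
    (hc : 0 ≤ c) (hf : ∀ k ∈ s, 0 ≤ f k) (hg : ∀ k ∈ s, 0 ≤ g k) (t u : Set α)
    (h : ∀ k ∈ s, k ∉ u → f k ≤ c * g k) :
    ∑ k ∈ s, t.indicator f k ≤ c * ∑ k ∈ s, t.indicator g k + ∑ k ∈ s, u.indicator f k := by
  rw [mul_sum, ← sum_add_distrib]
  refine sum_le_sum fun k hk => ?_
  have hcg : 0 ≤ c * t.indicator g k := mul_nonneg hc (Set.indicator_nonneg (fun _ _ => hg k hk) k)
  by_cases hu : k ∈ u
  · have htf : t.indicator f k ≤ f k := by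
      by_cases ht : k ∈ t <;> simp [ht, hf k hk]
    rw [Set.indicator_of_mem hu]
    linarith
  · rw [Set.indicator_of_notMem hu, add_zero]
    by_cases ht : k ∈ t
    · simpa [Set.indicator_of_mem ht] using h k hk hu
    · simp [Set.indicator_of_notMem ht]

section Law

variable {Ω ι : Type*} [MeasurableSpace Ω] {μ : Measure Ω} {X : ι → Ω → ℝ} {p : ℝ}

lemma ae_eq_zero_or_eq_one_of_measure [IsProbabilityMeasure μ] {Y : Ω → ℝ} (hY : Measurable Y)
    (hp0 : 0 ≤ p) (hp1 : p ≤ 1) (h1 : μ {ω | Y ω = 1} = ENNReal.ofReal p)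
    (h0 : μ {ω | Y ω = 0} = ENNReal.ofReal (1 - p)) :
    ∀ᵐ ω ∂μ, Y ω = 0 ∨ Y ω = 1 := by
  have hdisj : Disjoint {ω | Y ω = 0} {ω | Y ω = 1} :=
    Set.disjoint_left.2 fun ω h0 h1 => zero_ne_one (h0.symm.trans h1)
  have hunion : μ ({ω | Y ω = 0} ∪ {ω | Y ω = 1}) = 1 := by
    rw [measure_union hdisj (hY (measurableSet_singleton 1)), h0, h1,
      ← ENNReal.ofReal_add (sub_nonneg.2 hp1) hp0, sub_add_cancel, ENNReal.ofReal_one]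
  exact ae_iff.2 ((prob_compl_eq_zero_iff
    ((hY (measurableSet_singleton 0)).union (hY (measurableSet_singleton 1)))).2 hunion)

lemma measureReal_forall_eq_ite [DecidableEq ι] (hp0 : 0 ≤ p) (hp1 : p ≤ 1)
    (hindep : iIndepFun X μ) (h1 : ∀ i, μ {ω | X i ω = 1} = ENNReal.ofReal p)
    (h0 : ∀ i, μ {ω | X i ω = 0} = ENNReal.ofReal (1 - p)) {s T : Finset ι} (hT : T ⊆ s) :
    μ.real {ω | ∀ i ∈ s, X i ω = if i ∈ T then 1 else 0} = p ^ #T * (1 - p) ^ (#s - #T) := by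
  have hinter : {ω | ∀ i ∈ s, X i ω = if i ∈ T then 1 else 0}
      = ⋂ i ∈ s, X i ⁻¹' {if i ∈ T then 1 else 0} := by
    ext ω
    simp
  have hfactor : ∀ i, (μ (X i ⁻¹' {if i ∈ T then 1 else 0})).toReal
      = if i ∈ T then p else 1 - p := by
    intro i
    split_ifs
    · exact (congrArg ENNReal.toReal (h1 i)).trans (ENNReal.toReal_ofReal hp0)
    · exact (congrArg ENNReal.toReal (h0 i)).trans (ENNReal.toReal_ofReal (sub_nonneg.2 hp1))
  rw [measureReal_def, hinter, hindep.measure_inter_preimage_eq_mul s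
      fun i _ => measurableSet_singleton _, ENNReal.toReal_prod,
    prod_congr rfl fun i _ => hfactor i, prod_ite, filter_mem_eq_inter, inter_eq_right.2 hT,
    filter_not, filter_mem_eq_inter, inter_eq_right.2 hT, prod_const, prod_const,
    card_sdiff_of_subset hT]

lemma eq_filter_of_forall_eq_ite [DecidableEq ι] {s T : Finset ι} (hT : T ⊆ s) {x : ι → ℝ}
    (hx : ∀ i ∈ s, x i = if i ∈ T then 1 else 0) : T = s.filter (x · = 1) := by
  ext i
  by_cases hiT : i ∈ T
  · simp [hiT, hT hiT, hx i (hT hiT)]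
  · by_cases hi : i ∈ s <;> simp [hiT, hi, hx]

lemma measureReal_sum_mem_eq_binomialMass [IsProbabilityMeasure μ] (hp0 : 0 ≤ p) (hp1 : p ≤ 1)
    (hXmeas : ∀ i, Measurable (X i)) (hindep : iIndepFun X μ)
    (h1 : ∀ i, μ {ω | X i ω = 1} = ENNReal.ofReal p)
    (h0 : ∀ i, μ {ω | X i ω = 0} = ENNReal.ofReal (1 - p)) (s : Finset ι) (B : Set ℝ) :
    μ.real {ω | ∑ i ∈ s, X i ω ∈ B} = binomialMass p #s (Nat.cast ⁻¹' B) := by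
  classical
  set A : Finset ι → Set Ω := fun T => {ω | ∀ i ∈ s, X i ω = if i ∈ T then 1 else 0}
  set 𝒯 := s.powerset.filter (fun T => (#T : ℝ) ∈ B)
  have hae : {ω | ∑ i ∈ s, X i ω ∈ B} =ᵐ[μ] ⋃ T ∈ 𝒯, A T := by
    refine Filter.eventuallyEq_set.2 ?_
    filter_upwards [(Filter.eventually_all_finset s).2 fun i _ =>
      ae_eq_zero_or_eq_one_of_measure (hXmeas i) hp0 hp1 (h1 i) (h0 i)] with ω hω
    have hsum : ∑ i ∈ s, X i ω = #(s.filter (X · ω = 1)) := by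
      rw [← sum_boole]
      refine sum_congr rfl fun i hi => ?_
      rcases hω i hi with h | h <;> simp [h]
    have hmem : ω ∈ A (s.filter (X · ω = 1)) := fun i hi => by
      rcases hω i hi with h | h <;> simp [h, hi]
    simp only [𝒯, Set.mem_iUnion, mem_filter, mem_powerset, exists_prop]
    refine ⟨fun hB => ⟨_, ⟨filter_subset _ _, hsum ▸ hB⟩, hmem⟩, ?_⟩
    rintro ⟨T, ⟨hT, hB⟩, hωT⟩
    rwa [hsum, ← eq_filter_of_forall_eq_ite hT hωT]
  have hdisj : Set.PairwiseDisjoint ↑𝒯 A := by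
    intro T hT T' hT' hne
    refine Set.disjoint_left.2 fun ω hω hω' => hne ?_
    rw [eq_filter_of_forall_eq_ite (mem_powerset.1 (mem_filter.1 hT).1) hω,
      eq_filter_of_forall_eq_ite (mem_powerset.1 (mem_filter.1 hT').1) hω']
  have hmeas : ∀ T ∈ 𝒯, MeasurableSet (A T) := fun T _ => by
    simp only [A, Set.ofPred_forall]
    exact Finset.measurableSet_biInter s fun i _ => hXmeas i (measurableSet_singleton _)
  rw [measureReal_congr hae, measureReal_biUnion_finset hdisj hmeas, binomialMass, sum_filter]
  calc ∑ T ∈ s.powerset, (if (#T : ℝ) ∈ B then μ.real (A T) else 0)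
      = ∑ T ∈ s.powerset, (Nat.cast ⁻¹' B).indicator (fun k => p ^ k * (1 - p) ^ (#s - k)) #T :=
        sum_congr rfl fun T hT => by
          simp [Set.indicator_apply, A,
            measureReal_forall_eq_ite hp0 hp1 hindep h1 h0 (mem_powerset.1 hT)]
    _ = _ := by
        rw [sum_powerset_apply_card]
        refine sum_congr rfl fun k _ => ?_
        simp only [Set.indicator_apply, binomialWeight, nsmul_eq_mul]
        split_ifs <;> ring

end Law

noncomputable def privacyRate (p E : ℝ) : ℝ :=
  p * (1 - p) * (E - 1) / (1 + max p (1 - p) * (E - 1))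

section PrivacyRate

variable {p E : ℝ}

lemma privacyRate_nonneg (hp0 : 0 ≤ p) (hp1 : p ≤ 1) (hE : 1 ≤ E) : 0 ≤ privacyRate p E := by
  have : 0 ≤ 1 - p := sub_nonneg.2 hp1
  have : 0 ≤ E - 1 := sub_nonneg.2 hE
  have : 0 ≤ max p (1 - p) := hp0.trans (le_max_left _ _)
  unfold privacyRate
  positivity

lemma privacyRate_mul_le (hp0 : 0 ≤ p) (hp1 : p ≤ 1) (hE : 1 ≤ E) :
    privacyRate p E * E ≤ (1 - p) * (E - 1) := by
  have ha : 0 ≤ E - 1 := sub_nonneg.2 hE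
  have hM : p * (E - 1) ≤ max p (1 - p) * (E - 1) :=
    mul_le_mul_of_nonneg_right (le_max_left _ _) ha
  have hD : 0 < 1 + max p (1 - p) * (E - 1) := by nlinarith
  rw [privacyRate, div_mul_eq_mul_div, div_le_iff₀ hD]
  calc p * (1 - p) * (E - 1) * E = (1 - p) * (E - 1) * (p + p * (E - 1)) := by ring
    _ ≤ (1 - p) * (E - 1) * (1 + max p (1 - p) * (E - 1)) :=
        mul_le_mul_of_nonneg_left (by linarith) (mul_nonneg (sub_nonneg.2 hp1) ha)

lemma privacyRate_sq_le_or (hp0 : 0 < p) (hp1 : p < 1) (hE : 1 ≤ E) (n : ℕ) :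
    n * privacyRate p E ^ 2 ≤ 1 / 4 ∨
      n * privacyRate p E ≤ n * (1 - p) * (E - 1) - p := by
  refine (le_or_gt _ _).elim Or.inr fun hlin => Or.inl ?_
  set M := max p (1 - p)
  set a := E - 1
  set θ := privacyRate p E
  have ha : 0 ≤ a := sub_nonneg.2 hE
  have hpM : p * a ≤ M * a := mul_le_mul_of_nonneg_right (le_max_left _ _) ha
  have hD : 0 < 1 + M * a := by nlinarith
  have hpos : 0 < 1 - p + M * a := by nlinarith
  have hθ0 : 0 ≤ θ := privacyRate_nonneg hp0.le hp1.le hE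
  have hθD : θ * (1 + M * a) = p * (1 - p) * a := div_mul_cancel₀ _ hD.ne'
  have hgap : p * ((1 - p) * a - θ) = θ * (1 - p + M * a) := by linear_combination -hθD
  have hn : n * θ * (1 - p + M * a) < p ^ 2 := by
    rw [mul_assoc, ← hgap]
    nlinarith
  have hpq : p ^ 2 * (1 - p) ≤ 1 / 4 := by nlinarith [sq_nonneg (2 * p - 1)]
  have hrate : p ^ 2 * θ ≤ (1 - p + M * a) / 4 := by
    refine le_of_mul_le_mul_right ?_ hD
    calc p ^ 2 * θ * (1 + M * a) = p * a * (p ^ 2 * (1 - p)) := by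
          rw [mul_assoc, hθD]
          ring
      _ ≤ p * a * (1 / 4) := mul_le_mul_of_nonneg_left hpq (mul_nonneg hp0.le ha)
      _ ≤ (1 - p + M * a) / 4 * (1 + M * a) := by
          nlinarith [mul_nonneg hpos.le (le_trans (mul_nonneg hp0.le ha) hpM)]
  refine le_of_mul_le_mul_right ?_ hpos
  nlinarith [mul_le_mul_of_nonneg_right hn.le hθ0]

end PrivacyRate

section Comparison

variable {p : ℝ} {n : ℕ} {E θ : ℝ}

lemma binomialMass_le_mul_binomialMass_pred_add (hp0 : 0 < p) (hp1 : p < 1) (hn : 0 < n)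
    (hE : 0 ≤ E) (hθ0 : 0 ≤ θ) (hθ : θ * E ≤ (1 - p) * (E - 1)) (G : Set ℕ) :
    binomialMass p n G ≤ E * binomialMass p (n - 1) G + exp (-2 * n * θ ^ 2) := by
  have hn' : (0 : ℝ) < n := Nat.cast_pos.2 hn
  have hnq : 0 < n * (1 - p) := mul_pos hn' (by linarith)
  rw [binomialMass, binomialMass_eq_sum_range (show n - 1 < n + 1 by omega)]
  refine (sum_indicator_le_mul_sum_indicator_add hE
    (fun k _ => binomialWeight_nonneg hp0.le hp1.le n k)
    (fun k _ => binomialWeight_nonneg hp0.le hp1.le (n - 1) k) G {k | n * p + n * θ ≤ k}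
    fun k hk hk_tail => ?_).trans ?_
  · have hratio := binomialWeight_mul_sub (p := p) (Nat.lt_succ_iff.1 (mem_range.1 hk))
    have hgood : n * (1 - p) ≤ E * (n - k) := by
      simp only [Set.mem_ofPred_eq, not_le] at hk_tail
      nlinarith
    refine le_of_mul_le_mul_left ?_ hnq
    calc n * (1 - p) * binomialWeight p n k ≤ E * (n - k) * binomialWeight p n k :=
          mul_le_mul_of_nonneg_right hgood (binomialWeight_nonneg hp0.le hp1.le n k)
      _ = n * (1 - p) * (E * binomialWeight p (n - 1) k) := by linear_combination E * hratio
  · gcongr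
    calc ∑ k ∈ range (n + 1), {k : ℕ | n * p + n * θ ≤ k}.indicator (binomialWeight p n) k
        ≤ exp (-2 * (n * θ) ^ 2 / n) :=
          binomialMass_upperTail_le hp0.le hp1.le hn' le_rfl (by positivity)
      _ = exp (-2 * n * θ ^ 2) := by field_simp

lemma binomialMass_pred_le_mul_binomialMass_add (hp0 : 0 < p) (hp1 : p < 1) (hn : 0 < n)
    (hE : 0 ≤ E) (hθ0 : 0 ≤ θ) (hθ : n * θ ≤ n * (1 - p) * (E - 1) - p) (G : Set ℕ) :
    binomialMass p (n - 1) G ≤ E * binomialMass p n G + exp (-2 * n * θ ^ 2) := by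
  have hn' : (0 : ℝ) < n := Nat.cast_pos.2 hn
  have hnq : 0 < n * (1 - p) := mul_pos hn' (by linarith)
  have hcast : ((n - 1 : ℕ) : ℝ) = n - 1 := by rw [Nat.cast_pred hn]
  rw [binomialMass_eq_sum_range (show n - 1 < n + 1 by omega), binomialMass]
  refine (sum_indicator_le_mul_sum_indicator_add hE
    (fun k _ => binomialWeight_nonneg hp0.le hp1.le (n - 1) k)
    (fun k _ => binomialWeight_nonneg hp0.le hp1.le n k) G {k | k ≤ (n - 1 : ℕ) * p - n * θ}
    fun k hk hk_tail => ?_).trans ?_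
  · have hratio := binomialWeight_mul_sub (p := p) (Nat.lt_succ_iff.1 (mem_range.1 hk))
    have hgood : n - k ≤ E * (n * (1 - p)) := by
      simp only [Set.mem_ofPred_eq, not_le, hcast] at hk_tail
      nlinarith
    refine le_of_mul_le_mul_left ?_ hnq
    calc n * (1 - p) * binomialWeight p (n - 1) k = (n - k) * binomialWeight p n k := by
          linear_combination -hratio
      _ ≤ E * (n * (1 - p)) * binomialWeight p n k :=
          mul_le_mul_of_nonneg_right hgood (binomialWeight_nonneg hp0.le hp1.le n k)
      _ = n * (1 - p) * (E * binomialWeight p n k) := by ring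
  · rw [← binomialMass_eq_sum_range (show n - 1 < n + 1 by omega)]
    gcongr
    calc binomialMass p (n - 1) {k : ℕ | k ≤ (n - 1 : ℕ) * p - n * θ}
        ≤ exp (-2 * (n * θ) ^ 2 / n) :=
          binomialMass_lowerTail_le hp0.le hp1.le hn' (by rw [hcast]; linarith) (by positivity)
      _ = exp (-2 * n * θ ^ 2) := by field_simp

theorem binomialMass_noiselessPrivacy (hp0 : 0 < p) (hp1 : p < 1) (hn : 0 < n) (hE : 1 ≤ E)
    (G : Set ℕ) :
    binomialMass p n G
        ≤ E * binomialMass p (n - 1) G + 2 * exp (-2 * n * privacyRate p E ^ 2) ∧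
      binomialMass p (n - 1) G
        ≤ E * binomialMass p n G + 2 * exp (-2 * n * privacyRate p E ^ 2) := by
  have hθ0 := privacyRate_nonneg hp0.le hp1.le hE
  have hexp := exp_pos (-2 * n * privacyRate p E ^ 2)
  refine ⟨(binomialMass_le_mul_binomialMass_pred_add hp0 hp1 hn (by linarith) hθ0
    (privacyRate_mul_le hp0.le hp1.le hE) G).trans (by linarith), ?_⟩
  rcases privacyRate_sq_le_or hp0 hp1 hE n with hsmall | hθ
  · have : 1 ≤ 2 * exp (-2 * n * privacyRate p E ^ 2) := by
      linarith [add_one_le_exp (-2 * n * privacyRate p E ^ 2)]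
    have := binomialMass_nonneg hp0.le hp1.le (m := n) G
    nlinarith [binomialMass_le_one hp0.le hp1.le (m := n - 1) G]
  · exact (binomialMass_pred_le_mul_binomialMass_add hp0 hp1 hn (by linarith) hθ0 hθ G).trans
      (by linarith)

end Comparison

theorem bernoulli_sum_noiseless_privacy_fixed_eps_general
    {Ω : Type*} [MeasurableSpace Ω] (μ : Measure Ω) [IsProbabilityMeasure μ]
    (n : ℕ) (p : ℝ) (hp0 : 0 < p) (hp1 : p < 1)
    (X : Fin n → Ω → ℝ) (hXmeas : ∀ i, Measurable (X i))
    (hindep : iIndepFun X μ)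
    (hBern1 : ∀ i, μ {ω | X i ω = 1} = ENNReal.ofReal p)
    (hBern0 : ∀ i, μ {ω | X i ω = 0} = ENNReal.ofReal (1 - p))
    (ε : ℝ) (hε : 0 < ε)
    (δ : ℝ)
    (hδ : δ = if p ≤ 1 / 2 then
        2 * Real.exp (-2 * (n : ℝ) * p ^ 2 *
          ((Real.exp ε - 1) / (Real.exp ε + p / (1 - p))) ^ 2)
      else
        2 * Real.exp (-2 * (n : ℝ) * (1 - p) ^ 2 *
          ((Real.exp ε - 1) / (Real.exp ε + (1 - p) / p)) ^ 2)) :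
    ∀ j : Fin n, ∀ B : Set ℝ, MeasurableSet B →
      (μ {ω | (∑ i, X i ω) ∈ B}).toReal
          ≤ Real.exp ε * (μ {ω | (∑ i ∈ Finset.univ.erase j, X i ω) ∈ B}).toReal + δ ∧
      (μ {ω | (∑ i ∈ Finset.univ.erase j, X i ω) ∈ B}).toReal
          ≤ Real.exp ε * (μ {ω | (∑ i, X i ω) ∈ B}).toReal + δ := by
  intro j B _
  have hq : 0 < 1 - p := sub_pos.2 hp1
  have hE : 1 < exp ε := one_lt_exp_iff.2 hε
  have hδθ : δ = 2 * exp (-2 * n * privacyRate p (exp ε) ^ 2) := by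
    rw [hδ, privacyRate]
    split_ifs with hp
    · rw [max_eq_right (by linarith)]
      field_simp
      ring_nf
    · rw [max_eq_left (by linarith)]
      field_simp
      ring_nf
  have hlaw := measureReal_sum_mem_eq_binomialMass hp0.le hp1.le hXmeas hindep hBern1 hBern0
    (B := B)
  simp only [← measureReal_def]
  rw [hlaw, hlaw, card_erase_of_mem (mem_univ j), card_univ, Fintype.card_fin, hδθ]
  exact binomialMass_noiselessPrivacy hp0 hp1 j.pos hE.le _

/-- Noiseless privacy of the sum of i.i.d. Bernoulli(p) variables, for fixed `ε`:
for every index `j` and every (measurable) set `B`, the probability that the full sum lies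
in `B` is at most `e^ε` times the probability that the sum with coordinate `j` removed lies
in `B`, plus `δ`, and symmetrically. -/
theorem bernoulli_sum_noiseless_privacy_fixed_eps
    {Ω : Type*} [MeasurableSpace Ω] (μ : Measure Ω) [IsProbabilityMeasure μ]
    (n : ℕ) (hn : 1 ≤ n) (p : ℝ) (hp0 : 0 < p) (hp1 : p < 1)
    (X : Fin n → Ω → ℝ) (hXmeas : ∀ i, Measurable (X i))
    (hindep : iIndepFun X μ)
    (hBern1 : ∀ i, μ {ω | X i ω = 1} = ENNReal.ofReal p)
    (hBern0 : ∀ i, μ {ω | X i ω = 0} = ENNReal.ofReal (1 - p))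
    (ε : ℝ) (hε : 0 < ε)
    (δ : ℝ)
    (hδ : δ = if p ≤ 1 / 2 then
        2 * Real.exp (-2 * (n : ℝ) * p ^ 2 *
          ((Real.exp ε - 1) / (Real.exp ε + p / (1 - p))) ^ 2)
      else
        2 * Real.exp (-2 * (n : ℝ) * (1 - p) ^ 2 *
          ((Real.exp ε - 1) / (Real.exp ε + (1 - p) / p)) ^ 2)) :
    ∀ j : Fin n, ∀ B : Set ℝ, MeasurableSet B →
      (μ {ω | (∑ i, X i ω) ∈ B}).toReal
          ≤ Real.exp ε * (μ {ω | (∑ i ∈ Finset.univ.erase j, X i ω) ∈ B}).toReal + δ ∧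
      (μ {ω | (∑ i ∈ Finset.univ.erase j, X i ω) ∈ B}).toReal
          ≤ Real.exp ε * (μ {ω | (∑ i, X i ω) ∈ B}).toReal + δ :=
  bernoulli_sum_noiseless_privacy_fixed_eps_general μ n p hp0 hp1 X hXmeas hindep hBern1 hBern0 ε hε
    δ hδ
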